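/- arXiv:1911.09162 — 3 statements merged into one kernel-verified Lean document; each statement's English description precedes it below -/
import Mathlib

section
/- Let a > b > 0 and let x₀ ∈ [a+b, 2a−b]. Let D₁ be the uniform probability measure on [−2a,−a] ∪ [a,2a] (i.e., (1/(2a)) times Lebesgue measure restricted to this set) and let D₃ be the uniform probability measure on [x₀−b, x₀+b] (i.e., (1/(2b)) times Lebesgue measure restricted to this interval). Then W₁(D₁, D₃) = (x₀−b)²/(2(a−b)) − x₀ + 2a, where W₁(μ,ν) denotes the infimum, over all probability measures γ on ℝ × ℝ whose first marginal is μ and second marginal is ν, of ∫ |x−y| dγ(x,y). -/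
open MeasureTheory

/-- A coupling of `(μ, ν)`: a probability measure on the product whose first marginal
is `μ` and whose second marginal is `ν`. -/
def IsCoupling (γ : Measure (ℝ × ℝ)) (μ ν : Measure ℝ) : Prop :=
  IsProbabilityMeasure γ ∧ γ.map Prod.fst = μ ∧ γ.map Prod.snd = ν

/-- Wasserstein-1 distance on ℝ: the infimum over all couplings `γ` of `(μ, ν)` of
`∫ |x − y| dγ(x, y)`. -/
noncomputable def W1 (μ ν : Measure ℝ) : ℝ :=
  sInf {r : ℝ | ∃ γ : Measure (ℝ × ℝ), IsCoupling γ μ ν ∧ r = ∫ p, |p.1 - p.2| ∂γ}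

/-- The uniform probability measure on `[−2a, −a] ∪ [a, 2a]`:
`(1/(2a))` times Lebesgue measure restricted to this set. -/
noncomputable def D₁ (a : ℝ) : Measure ℝ :=
  ENNReal.ofReal (1 / (2 * a)) •
    (volume.restrict (Set.Icc (-(2 * a)) (-a) ∪ Set.Icc a (2 * a)))

/-- The uniform probability measure on `[x₀ − b, x₀ + b]`:
`(1/(2b))` times Lebesgue measure restricted to this interval. -/
noncomputable def D₃ (x₀ b : ℝ) : Measure ℝ :=
  ENNReal.ofReal (1 / (2 * b)) • (volume.restrict (Set.Icc (x₀ - b) (x₀ + b)))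

/- ### Auxiliary lemmas -/

lemma affine_measurableEmbedding (c d : ℝ) (hc : c ≠ 0) :
    MeasurableEmbedding (fun q : ℝ => c * q + d) :=
  (((Homeomorph.mulLeft₀ c hc).trans (Homeomorph.addRight d)).toMeasurableEquiv).measurableEmbedding

lemma map_affine_volume (c d : ℝ) (hc : 0 < c) :
    Measure.map (fun q : ℝ => c * q + d) volume = ENNReal.ofReal (1/c) • volume := by
  have h1 : (fun q : ℝ => c * q + d) = (fun q : ℝ => q + d) ∘ (fun q : ℝ => c * q) := rfl
  rw [h1, ← Measure.map_map (measurable_add_const d) (measurable_const_mul c),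
    Real.map_volume_mul_left hc.ne', Measure.map_smul,
    (measurePreserving_add_right volume d).map_eq]
  congr 1
  rw [abs_of_nonneg (by positivity), one_div]

lemma map_affine_restrict (c d u v : ℝ) (hc : 0 < c) :
    (volume.restrict (Set.Icc u v)).map (fun q : ℝ => c * q + d)
      = ENNReal.ofReal (1/c) • volume.restrict (Set.Icc (c*u+d) (c*v+d)) := by
  have he := affine_measurableEmbedding c d hc.ne'
  have hpre : (fun q : ℝ => c * q + d) ⁻¹' (Set.Icc (c*u+d) (c*v+d)) = Set.Icc u v := by
    ext q
    simp only [Set.mem_preimage, Set.mem_Icc]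
    constructor <;> rintro ⟨h1, h2⟩ <;> constructor <;> nlinarith
  rw [← hpre, ← he.restrict_map, map_affine_volume c d hc, Measure.restrict_smul]

/-- The optimal coupling. -/
noncomputable def gam (a b x₀ : ℝ) : Measure (ℝ × ℝ) :=
  ((volume.restrict (Set.Icc (0:ℝ) (1/2))).map
      (fun q : ℝ => (2*a*q + (-(2*a)), 2*b*q + (x₀ - b))))
  + ((volume.restrict (Set.Icc (1/2 : ℝ) 1)).map
      (fun q : ℝ => (2*a*q + 0, 2*b*q + (x₀ - b))))

lemma integral_affine (α β u v : ℝ) : ∫ q in u..v, (α*q + β) = α*(v^2-u^2)/2 + β*(v-u) := by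
  have h1 : IntervalIntegrable (fun q : ℝ => α * q) volume u v :=
    ((continuous_const.mul continuous_id).intervalIntegrable _ _)
  rw [intervalIntegral.integral_add h1 intervalIntegrable_const,
    intervalIntegral.integral_const_mul, integral_id, intervalIntegral.integral_const]
  simp only [smul_eq_mul]
  ring

lemma integral_abs_Icc (s u v : ℝ) (h1 : u ≤ s) (h2 : s ≤ v) :
    ∫ t in Set.Icc u v, |t - s| = (s-u)^2/2 + (v-s)^2/2 := by
  have habs : Continuous (fun t : ℝ => |t - s|) := by fun_prop
  have hi : ∀ p q : ℝ, IntervalIntegrable (fun t : ℝ => |t - s|) volume p q := fun p q =>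
    habs.intervalIntegrable p q
  rw [integral_Icc_eq_integral_Ioc, ← intervalIntegral.integral_of_le (h1.trans h2),
    ← intervalIntegral.integral_add_adjacent_intervals (hi u s) (hi s v)]
  have e1 : ∫ t in u..s, |t - s| = ∫ t in u..s, ((-1)*t + s) := by
    refine intervalIntegral.integral_congr fun t ht => ?_
    rw [Set.uIcc_of_le h1] at ht
    rw [abs_of_nonpos (by linarith [ht.2])]; ring
  have e2 : ∫ t in s..v, |t - s| = ∫ t in s..v, (1*t + (-s)) := by
    refine intervalIntegral.integral_congr fun t ht => ?_
    rw [Set.uIcc_of_le h2] at ht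
    rw [abs_of_nonneg (by linarith [ht.1])]; ring
  rw [e1, e2, integral_affine, integral_affine]
  ring

lemma integral_abs_Icc' (s u v : ℝ) (h1 : u ≤ v) (h2 : v ≤ s) :
    ∫ t in Set.Icc u v, |t - s| = s*(v-u) - (v^2-u^2)/2 := by
  rw [integral_Icc_eq_integral_Ioc, ← intervalIntegral.integral_of_le h1]
  have e1 : ∫ t in u..v, |t - s| = ∫ t in u..v, ((-1)*t + s) := by
    refine intervalIntegral.integral_congr fun t ht => ?_
    rw [Set.uIcc_of_le h1] at ht
    rw [abs_of_nonpos (by linarith [ht.2])]; ring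
  rw [e1, integral_affine]
  ring

lemma gam_coupling (a b x₀ : ℝ) (hb : 0 < b) (hab : b < a)
    (hx₀ : x₀ ∈ Set.Icc (a + b) (2 * a - b)) :
    IsCoupling (gam a b x₀) (D₁ a) (D₃ x₀ b) := by
  have ha : 0 < a := hb.trans hab
  have h2a : 0 < 2*a := by linarith
  have h2b : 0 < 2*b := by linarith
  have hF₁ : Measurable (fun q : ℝ => (2*a*q + (-(2*a)), 2*b*q + (x₀ - b))) := by fun_prop
  have hF₂ : Measurable (fun q : ℝ => (2*a*q + 0, 2*b*q + (x₀ - b))) := by fun_prop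
  refine ⟨⟨?_⟩, ?_, ?_⟩
  · rw [gam, Measure.add_apply, Measure.map_apply hF₁ .univ, Measure.map_apply hF₂ .univ]
    simp only [Set.preimage_univ, Measure.restrict_apply_univ]
    rw [Real.volume_Icc, Real.volume_Icc]
    rw [← ENNReal.ofReal_add (by norm_num) (by norm_num)]
    norm_num
  · rw [gam, Measure.map_add _ _ measurable_fst,
      Measure.map_map measurable_fst hF₁, Measure.map_map measurable_fst hF₂]
    have e1 : (Prod.fst ∘ fun q : ℝ => (2*a*q + (-(2*a)), 2*b*q + (x₀ - b)))
        = fun q : ℝ => 2*a*q + (-(2*a)) := rfl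
    have e2 : (Prod.fst ∘ fun q : ℝ => (2*a*q + 0, 2*b*q + (x₀ - b)))
        = fun q : ℝ => 2*a*q + 0 := rfl
    rw [e1, e2, map_affine_restrict _ _ _ _ h2a, map_affine_restrict _ _ _ _ h2a, D₁]
    have e3 : 2*a*0 + -(2*a) = -(2*a) := by ring
    have e4 : 2*a*(1/2) + -(2*a) = -a := by ring
    have e5 : 2*a*(1/2) + 0 = a := by ring
    have e6 : 2*a*1 + 0 = 2*a := by ring
    rw [e3, e4, e5, e6, ← smul_add, ← Measure.restrict_union
      (Set.disjoint_left.mpr (fun x hx hx' => by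
        simp only [Set.mem_Icc] at hx hx'; linarith [hx.2, hx'.1])) measurableSet_Icc]
  · rw [gam, Measure.map_add _ _ measurable_snd,
      Measure.map_map measurable_snd hF₁, Measure.map_map measurable_snd hF₂]
    have e1 : (Prod.snd ∘ fun q : ℝ => (2*a*q + (-(2*a)), 2*b*q + (x₀ - b)))
        = fun q : ℝ => 2*b*q + (x₀ - b) := rfl
    have e2 : (Prod.snd ∘ fun q : ℝ => (2*a*q + 0, 2*b*q + (x₀ - b)))
        = fun q : ℝ => 2*b*q + (x₀ - b) := rfl
    rw [e1, e2, map_affine_restrict _ _ _ _ h2b, map_affine_restrict _ _ _ _ h2b, D₃]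
    have e3 : 2*b*0 + (x₀ - b) = x₀ - b := by ring
    have e4 : 2*b*(1/2) + (x₀ - b) = x₀ := by ring
    have e5 : 2*b*1 + (x₀ - b) = x₀ + b := by ring
    rw [e3, e4, e5, ← smul_add,
      show volume.restrict (Set.Icc (x₀ - b) x₀) = volume.restrict (Set.Ico (x₀ - b) x₀) from
        restrict_Ico_eq_restrict_Icc.symm,
      ← Measure.restrict_union (Set.disjoint_left.mpr (fun x hx hx' => by
        simp only [Set.mem_Ico, Set.mem_Icc] at hx hx'; linarith [hx.2, hx'.1]))
        measurableSet_Icc,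
      Set.Ico_union_Icc_eq_Icc (by linarith) (by linarith)]

set_option maxHeartbeats 1000000 in
lemma gam_integral (a b x₀ : ℝ) (hb : 0 < b) (hab : b < a)
    (hx₀ : x₀ ∈ Set.Icc (a + b) (2 * a - b)) :
    ∫ p, |p.1 - p.2| ∂(gam a b x₀) = (x₀ - b) ^ 2 / (2 * (a - b)) - x₀ + 2 * a := by
  obtain ⟨hx1, hx2⟩ := hx₀
  have ha : 0 < a := hb.trans hab
  have hc : 0 < a - b := by linarith
  obtain ⟨q', hq'⟩ : ∃ q' : ℝ, q' = (x₀ - b)/(2*(a-b)) := ⟨_, rfl⟩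
  have hq1 : 1/2 ≤ q' := by rw [hq', le_div_iff₀ (by linarith)]; linarith
  have hq2 : q' ≤ 1 := by rw [hq', div_le_iff₀ (by linarith)]; linarith
  have hFc₁ : Continuous (fun q : ℝ => (2*a*q + (-(2*a)), 2*b*q + (x₀ - b))) := by fun_prop
  have hFc₂ : Continuous (fun q : ℝ => (2*a*q + 0, 2*b*q + (x₀ - b))) := by fun_prop
  have hcont : Continuous (fun p : ℝ × ℝ => |p.1 - p.2|) :=
    (continuous_fst.sub continuous_snd).abs
  -- split the integral over the sum of measures
  have hint1 : Integrable (fun p : ℝ × ℝ => |p.1 - p.2|)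
      ((volume.restrict (Set.Icc (0:ℝ) (1/2))).map
        (fun q : ℝ => (2*a*q + (-(2*a)), 2*b*q + (x₀ - b)))) := by
    rw [integrable_map_measure hcont.aestronglyMeasurable hFc₁.measurable.aemeasurable]
    exact (hcont.comp hFc₁).integrableOn_Icc
  have hint2 : Integrable (fun p : ℝ × ℝ => |p.1 - p.2|)
      ((volume.restrict (Set.Icc (1/2 : ℝ) 1)).map
        (fun q : ℝ => (2*a*q + 0, 2*b*q + (x₀ - b)))) := by
    rw [integrable_map_measure hcont.aestronglyMeasurable hFc₂.measurable.aemeasurable]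
    exact (hcont.comp hFc₂).integrableOn_Icc
  rw [gam, integral_add_measure hint1 hint2,
    integral_map hFc₁.measurable.aemeasurable hcont.aestronglyMeasurable,
    integral_map hFc₂.measurable.aemeasurable hcont.aestronglyMeasurable]
  simp only [Function.comp_def]
  rw [integral_Icc_eq_integral_Ioc, integral_Icc_eq_integral_Ioc,
    ← intervalIntegral.integral_of_le (by norm_num : (0:ℝ) ≤ 1/2),
    ← intervalIntegral.integral_of_le (by norm_num : (1:ℝ)/2 ≤ 1)]
  -- first piece
  have e1 : ∫ q in (0:ℝ)..(1/2), |(2*a*q + -(2*a)) - (2*b*q + (x₀ - b))|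
      = ∫ q in (0:ℝ)..(1/2), ((2*b-2*a)*q + (x₀ - b + 2*a)) := by
    refine intervalIntegral.integral_congr fun q hq => ?_
    rw [Set.uIcc_of_le (by norm_num)] at hq
    obtain ⟨h0, h1⟩ := hq
    rw [abs_of_nonpos (by nlinarith)]
    ring
  -- second piece: split at q'
  have e2 : ∫ q in (1/2 : ℝ)..1, |(2*a*q + 0) - (2*b*q + (x₀ - b))|
      = (∫ q in (1/2 : ℝ)..q', ((2*b-2*a)*q + (x₀ - b)))
        + ∫ q in q'..1, ((2*a-2*b)*q + (b - x₀)) := by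
    have hi : ∀ u v : ℝ, IntervalIntegrable
        (fun q : ℝ => |(2*a*q + 0) - (2*b*q + (x₀ - b))|) volume u v := fun u v =>
      Continuous.intervalIntegrable (by fun_prop) u v
    rw [← intervalIntegral.integral_add_adjacent_intervals (hi (1/2) q') (hi q' 1)]
    congr 1
    · refine intervalIntegral.integral_congr fun q hq => ?_
      rw [Set.uIcc_of_le hq1] at hq
      obtain ⟨h0, h1⟩ := hq
      have : 2*(a-b)*q ≤ 2*(a-b)*q' := by nlinarith
      rw [hq'] at this
      rw [abs_of_nonpos (by
        have h2 : 2*(a-b)*((x₀-b)/(2*(a-b))) = x₀ - b := by field_simp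
        nlinarith [this, h2])]
      ring
    · refine intervalIntegral.integral_congr fun q hq => ?_
      rw [Set.uIcc_of_le hq2] at hq
      obtain ⟨h0, h1⟩ := hq
      have : 2*(a-b)*q' ≤ 2*(a-b)*q := by nlinarith
      rw [hq'] at this
      rw [abs_of_nonneg (by
        have h2 : 2*(a-b)*((x₀-b)/(2*(a-b))) = x₀ - b := by field_simp
        nlinarith [this, h2])]
      ring
  rw [e1, e2, integral_affine, integral_affine, integral_affine, hq']
  field_simp
  ring

set_option maxHeartbeats 800000 in
lemma lower_bound (a b x₀ : ℝ) (hb : 0 < b) (hab : b < a)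
    (hx₀ : x₀ ∈ Set.Icc (a + b) (2 * a - b))
    (γ : Measure (ℝ × ℝ)) (hγ : IsCoupling γ (D₁ a) (D₃ x₀ b)) :
    (x₀ - b) ^ 2 / (2 * (a - b)) - x₀ + 2 * a ≤ ∫ p, |p.1 - p.2| ∂γ := by
  obtain ⟨hx1, hx2⟩ := hx₀
  obtain ⟨hprob, hfst, hsnd⟩ := hγ
  haveI := hprob
  have ha : 0 < a := hb.trans hab
  have hc : 0 < a - b := by linarith
  obtain ⟨t', ht'⟩ : ∃ t' : ℝ, t' = a*(x₀-b)/(a-b) := ⟨_, rfl⟩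
  have ht1 : a ≤ t' := by rw [ht', le_div_iff₀ hc]; nlinarith
  have ht2 : t' ≤ 2*a := by rw [ht', div_le_iff₀ hc]; nlinarith
  have ht3 : x₀ ≤ t' := by rw [ht', le_div_iff₀ hc]; nlinarith
  have ht4 : t' ≤ x₀ + b := by rw [ht', div_le_iff₀ hc]; nlinarith
  have habs : Continuous (fun t : ℝ => |t - t'|) := by fun_prop
  -- a.e. bounds from the marginals
  have hae1 : ∀ᵐ p ∂γ, (p : ℝ × ℝ).1 ∈ Set.Icc (-(2*a)) (2*a) := by
    rw [ae_iff]
    have hset : {p : ℝ × ℝ | ¬ p.1 ∈ Set.Icc (-(2*a)) (2*a)}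
        = Prod.fst ⁻¹' (Set.Icc (-(2*a)) (2*a))ᶜ := rfl
    rw [hset, ← Measure.map_apply measurable_fst measurableSet_Icc.compl, hfst, D₁,
      Measure.smul_apply, Measure.restrict_apply measurableSet_Icc.compl]
    have hempty : (Set.Icc (-(2*a)) (2*a))ᶜ ∩ (Set.Icc (-(2*a)) (-a) ∪ Set.Icc a (2*a))
        = ∅ := by
      rw [Set.eq_empty_iff_forall_notMem]
      rintro x ⟨hx, hx'⟩
      simp only [Set.mem_compl_iff, Set.mem_Icc, not_and_or, not_le] at hx
      rcases hx' with h | h <;> rcases hx with h' | h' <;>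
        simp only [Set.mem_Icc] at h <;> linarith [h.1, h.2]
    rw [hempty, measure_empty, smul_zero]
  have hae2 : ∀ᵐ p ∂γ, (p : ℝ × ℝ).2 ∈ Set.Icc (x₀ - b) (x₀ + b) := by
    rw [ae_iff]
    have hset : {p : ℝ × ℝ | ¬ p.2 ∈ Set.Icc (x₀-b) (x₀+b)}
        = Prod.snd ⁻¹' (Set.Icc (x₀-b) (x₀+b))ᶜ := rfl
    rw [hset, ← Measure.map_apply measurable_snd measurableSet_Icc.compl, hsnd, D₃,
      Measure.smul_apply, Measure.restrict_apply measurableSet_Icc.compl,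
      Set.compl_inter_self, measure_empty, smul_zero]
  -- integrability
  have hcont : Continuous (fun p : ℝ × ℝ => |p.1 - p.2|) :=
    (continuous_fst.sub continuous_snd).abs
  have hb1 : ∀ᵐ p ∂γ, ‖|(p : ℝ × ℝ).1 - p.2|‖ ≤ 4*a := by
    filter_upwards [hae1, hae2] with p h1 h2
    rw [Real.norm_eq_abs, abs_abs, abs_sub_le_iff]
    obtain ⟨a1, a2⟩ := h1; obtain ⟨b1, b2⟩ := h2
    constructor <;> nlinarith
  have hint0 : Integrable (fun p : ℝ × ℝ => |p.1 - p.2|) γ :=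
    Integrable.mono' (integrable_const (4*a)) hcont.aestronglyMeasurable hb1
  have hint1 : Integrable (fun p : ℝ × ℝ => |p.1 - t'|) γ := by
    refine Integrable.mono' (integrable_const (4*a))
      ((habs.comp continuous_fst).aestronglyMeasurable) ?_
    filter_upwards [hae1] with p h1
    rw [Real.norm_eq_abs, abs_abs, abs_sub_le_iff]
    obtain ⟨a1, a2⟩ := h1
    constructor <;> nlinarith
  have hint2 : Integrable (fun p : ℝ × ℝ => |p.2 - t'|) γ := by
    refine Integrable.mono' (integrable_const (4*a))
      ((habs.comp continuous_snd).aestronglyMeasurable) ?_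
    filter_upwards [hae2] with p h1
    rw [Real.norm_eq_abs, abs_abs, abs_sub_le_iff]
    obtain ⟨a1, a2⟩ := h1
    constructor <;> nlinarith
  -- pointwise bound and reduction to marginal integrals
  have step1 : ∫ p, (|(p : ℝ × ℝ).1 - t'| - |p.2 - t'|) ∂γ ≤ ∫ p, |(p : ℝ × ℝ).1 - p.2| ∂γ := by
    refine integral_mono (hint1.sub hint2) hint0 fun p => ?_
    have := abs_sub_abs_le_abs_sub (p.1 - t') (p.2 - t')
    rwa [show p.1 - t' - (p.2 - t') = p.1 - p.2 by ring] at this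
  rw [integral_sub hint1 hint2] at step1
  have m1 : ∫ p, |(p : ℝ × ℝ).1 - t'| ∂γ = ∫ t, |t - t'| ∂(D₁ a) := by
    rw [← hfst, integral_map measurable_fst.aemeasurable habs.aestronglyMeasurable]
  have m2 : ∫ p, |(p : ℝ × ℝ).2 - t'| ∂γ = ∫ t, |t - t'| ∂(D₃ x₀ b) := by
    rw [← hsnd, integral_map measurable_snd.aemeasurable habs.aestronglyMeasurable]
  -- compute the marginal integrals
  have c1 : ∫ t, |t - t'| ∂(D₁ a)
      = (1/(2*a)) * ((t'*(-a-(-(2*a))) - ((-a)^2-(-(2*a))^2)/2) + ((t'-a)^2/2 + (2*a-t')^2/2)) := by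
    rw [D₁, integral_smul_measure, ENNReal.toReal_ofReal (by positivity),
      setIntegral_union (Set.disjoint_left.mpr (fun x hx hx' => by
        simp only [Set.mem_Icc] at hx hx'; linarith [hx.2, hx'.1])) measurableSet_Icc
        (habs.integrableOn_Icc) (habs.integrableOn_Icc),
      integral_abs_Icc' t' (-(2*a)) (-a) (by linarith) (by linarith),
      integral_abs_Icc t' a (2*a) ht1 ht2]
    simp only [smul_eq_mul]
  have c2 : ∫ t, |t - t'| ∂(D₃ x₀ b)
      = (1/(2*b)) * ((t'-(x₀-b))^2/2 + ((x₀+b)-t')^2/2) := by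
    rw [D₃, integral_smul_measure, ENNReal.toReal_ofReal (by positivity),
      integral_abs_Icc t' (x₀-b) (x₀+b) (by linarith) ht4]
    simp only [smul_eq_mul]
  have key : (x₀ - b) ^ 2 / (2 * (a - b)) - x₀ + 2 * a
      = (1/(2*a)) * ((t'*(-a-(-(2*a))) - ((-a)^2-(-(2*a))^2)/2) + ((t'-a)^2/2 + (2*a-t')^2/2))
        - (1/(2*b)) * ((t'-(x₀-b))^2/2 + ((x₀+b)-t')^2/2) := by
    rw [ht']
    field_simp
    ring
  rw [key, ← c1, ← c2, ← m1, ← m2]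
  exact step1

theorem stmt_4 (a b x₀ : ℝ) (hb : 0 < b) (hab : b < a)
    (hx₀ : x₀ ∈ Set.Icc (a + b) (2 * a - b)) :
    W1 (D₁ a) (D₃ x₀ b) = (x₀ - b) ^ 2 / (2 * (a - b)) - x₀ + 2 * a := by
  set V := (x₀ - b) ^ 2 / (2 * (a - b)) - x₀ + 2 * a with hV
  have hmem : V ∈ {r : ℝ | ∃ γ : Measure (ℝ × ℝ), IsCoupling γ (D₁ a) (D₃ x₀ b) ∧
      r = ∫ p, |p.1 - p.2| ∂γ} :=
    ⟨gam a b x₀, gam_coupling a b x₀ hb hab hx₀, (gam_integral a b x₀ hb hab hx₀).symm⟩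
  have hlb : ∀ r ∈ {r : ℝ | ∃ γ : Measure (ℝ × ℝ), IsCoupling γ (D₁ a) (D₃ x₀ b) ∧
      r = ∫ p, |p.1 - p.2| ∂γ}, V ≤ r := by
    rintro r ⟨γ, hγ, rfl⟩
    exact lower_bound a b x₀ hb hab hx₀ γ hγ
  exact le_antisymm (csInf_le ⟨V, hlb⟩ hmem) (le_csInf ⟨V, hmem⟩ hlb)
end

section
/- Let a > b > 0 and let x₀ ∈ [a+b/2, 2a−b/2]. Let D₁ be the uniform probability measure on [−2a,−a] ∪ [a,2a] and let D₂ be the uniform probability measure on [−x₀−b/2, −x₀+b/2] ∪ [x₀−b/2, x₀+b/2] (i.e., (1/(2b)) times Lebesgue measure restricted to this set). Then W₁(D₁, D₂) ≤ (3/2)a − (1/2)b, where W₁(μ,ν) denotes the infimum, over all probability measures γ on ℝ × ℝ whose first marginal is μ and second marginal is ν, of ∫ |x−y| dγ(x,y). -/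
/-!
Split each measure into its two halves: `D₁` is the equal-weight mixture of the uniform
distributions on `[-2a, -a]` and `[a, 2a]`, and since `x₀ ∈ [a + b/2, 2a - b/2]` the two halves
of `D₂` are uniform distributions on subintervals of these. Coupling the negative halves and the
positive halves independently moves no mass by more than the length `a` of an interval, and
`a ≤ (3/2)a - (1/2)b` because `b < a`.
-/

open MeasureTheory

/-- The uniform probability measure on `[−x₀−b/2, −x₀+b/2] ∪ [x₀−b/2, x₀+b/2]`:
`(1/(2b))` times Lebesgue measure restricted to this set. -/
noncomputable def D₂ (x₀ b : ℝ) : Measure ℝ :=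
  ENNReal.ofReal (1 / (2 * b)) •
    (volume.restrict
      (Set.Icc (-x₀ - b / 2) (-x₀ + b / 2) ∪ Set.Icc (x₀ - b / 2) (x₀ + b / 2)))

open ProbabilityTheory Set

theorem Icc_disjoint_Icc_of_lt {a b c d : ℝ} (h : b < c) : Disjoint (Icc a b) (Icc c d) :=
  (Iic_disjoint_Ici.2 h.not_ge).mono Icc_subset_Iic_self Icc_subset_Ici_self

theorem W1_le_of_isCoupling {γ : Measure (ℝ × ℝ)} {μ ν : Measure ℝ} {C : ℝ}
    (hγ : IsCoupling γ μ ν) (hC : ∀ᵐ p ∂γ, |p.1 - p.2| ≤ C) : W1 μ ν ≤ C := by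
  have := hγ.1
  refine csInf_le_of_le ⟨0, ?_⟩ ⟨γ, hγ, rfl⟩ ?_
  · rintro r ⟨γ', -, rfl⟩
    exact integral_nonneg fun p => abs_nonneg _
  · have h := norm_integral_le_of_norm_le_const (μ := γ) (f := fun p => |p.1 - p.2|)
      (by simpa only [Real.norm_eq_abs, abs_abs] using hC)
    rw [probReal_univ, mul_one] at h
    exact (le_abs_self _).trans h

theorem isCoupling_add_smul_prod {μ₁ μ₂ ν₁ ν₂ : Measure ℝ} [IsProbabilityMeasure μ₁]
    [IsProbabilityMeasure μ₂] [IsProbabilityMeasure ν₁] [IsProbabilityMeasure ν₂]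
    {w₁ w₂ : ENNReal} (hw : w₁ + w₂ = 1) :
    IsCoupling (w₁ • μ₁.prod ν₁ + w₂ • μ₂.prod ν₂) (w₁ • μ₁ + w₂ • μ₂) (w₁ • ν₁ + w₂ • ν₂) := by
  refine ⟨⟨?_⟩, ?_, ?_⟩
  · simp [hw]
  · simp [Measure.map_add _ _ measurable_fst, Measure.map_smul]
  · simp [Measure.map_add _ _ measurable_snd, Measure.map_smul]

theorem MeasureTheory.Measure.ae_prod_of_ae_of_ae {α β : Type*} [MeasurableSpace α]
    [MeasurableSpace β] {μ : Measure α} {ν : Measure β} [SFinite ν] {p : α → Prop} {q : β → Prop}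
    (hp : ∀ᵐ x ∂μ, p x) (hq : ∀ᵐ y ∂ν, q y) : ∀ᵐ z ∂μ.prod ν, p z.1 ∧ q z.2 :=
  (Measure.quasiMeasurePreserving_fst.ae hp).and (Measure.quasiMeasurePreserving_snd.ae hq)

theorem ae_prod_abs_sub_le_of_ae_mem_Icc {μ ν : Measure ℝ} [SFinite ν] {u v : ℝ}
    (hμ : ∀ᵐ x ∂μ, x ∈ Icc u v) (hν : ∀ᵐ y ∂ν, y ∈ Icc u v) :
    ∀ᵐ p ∂μ.prod ν, |p.1 - p.2| ≤ v - u := by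
  filter_upwards [Measure.ae_prod_of_ae_of_ae hμ hν] with p ⟨hx, hy⟩
  exact Real.dist_le_of_mem_Icc hx hy

theorem isProbabilityMeasure_cond_Icc {u v : ℝ} (h : u < v) :
    IsProbabilityMeasure (volume[|Icc u v]) :=
  cond_isProbabilityMeasure_of_finite (by simp [h]) (by simp)

theorem ae_cond_Icc_mem_Icc {u v u' v' : ℝ} (hu : u' ≤ u) (hv : v ≤ v') :
    ∀ᵐ x ∂volume[|Icc u v], x ∈ Icc u' v' := by
  filter_upwards [ae_cond_mem measurableSet_Icc] with x hx
  exact Icc_subset_Icc hu hv hx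

theorem smul_restrict_union_eq_add_cond {α : Type*} [MeasurableSpace α] (μ : Measure α)
    {s t : Set α} (hst : Disjoint s t) (ht : MeasurableSet t) {L : ℝ} (hL : 0 < L)
    (hs : μ s = ENNReal.ofReal L) (ht' : μ t = ENNReal.ofReal L) :
    ENNReal.ofReal (1 / (2 * L)) • μ.restrict (s ∪ t) =
      (2⁻¹ : ENNReal) • μ[|s] + (2⁻¹ : ENNReal) • μ[|t] := by
  have hc : ENNReal.ofReal (1 / (2 * L)) = (2⁻¹ : ENNReal) * (ENNReal.ofReal L)⁻¹ := by
    rw [one_div, ENNReal.ofReal_inv_of_pos (by positivity), ENNReal.ofReal_mul zero_le_two,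
      ENNReal.ofReal_ofNat, ENNReal.mul_inv (by simp) (by simp)]
  rw [Measure.restrict_union hst ht, ProbabilityTheory.cond, ProbabilityTheory.cond, hs, ht',
    smul_smul, smul_smul, ← hc, smul_add]

theorem stmt_6 (a b x₀ : ℝ) (hb : 0 < b) (hab : b < a)
    (hx₀ : x₀ ∈ Set.Icc (a + b / 2) (2 * a - b / 2)) :
    W1 (D₁ a) (D₂ x₀ b) ≤ (3 / 2) * a - (1 / 2) * b := by
  obtain ⟨hx₀l, hx₀r⟩ := hx₀
  have ha : 0 < a := hb.trans hab
  have hD₁ : D₁ a = (2⁻¹ : ENNReal) • volume[|Icc (-(2 * a)) (-a)] +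
      (2⁻¹ : ENNReal) • volume[|Icc a (2 * a)] :=
    smul_restrict_union_eq_add_cond _ (Icc_disjoint_Icc_of_lt (by linarith)) measurableSet_Icc
      ha (by rw [Real.volume_Icc]; ring_nf) (by rw [Real.volume_Icc]; ring_nf)
  have hD₂ : D₂ x₀ b = (2⁻¹ : ENNReal) • volume[|Icc (-x₀ - b / 2) (-x₀ + b / 2)] +
      (2⁻¹ : ENNReal) • volume[|Icc (x₀ - b / 2) (x₀ + b / 2)] :=
    smul_restrict_union_eq_add_cond _ (Icc_disjoint_Icc_of_lt (by linarith)) measurableSet_Icc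
      hb (by rw [Real.volume_Icc]; ring_nf) (by rw [Real.volume_Icc]; ring_nf)
  have := isProbabilityMeasure_cond_Icc (show -(2 * a) < -a by linarith)
  have := isProbabilityMeasure_cond_Icc (show a < 2 * a by linarith)
  have := isProbabilityMeasure_cond_Icc (show -x₀ - b / 2 < -x₀ + b / 2 by linarith)
  have := isProbabilityMeasure_cond_Icc (show x₀ - b / 2 < x₀ + b / 2 by linarith)
  rw [hD₁, hD₂]
  refine (W1_le_of_isCoupling (isCoupling_add_smul_prod ENNReal.inv_two_add_inv_two) ?_).trans
    (show a ≤ 3 / 2 * a - 1 / 2 * b by linarith)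
  rw [ae_add_measure_iff]
  constructor <;> refine Measure.ae_smul_measure ?_ _
  · filter_upwards [ae_prod_abs_sub_le_of_ae_mem_Icc (ae_cond_Icc_mem_Icc le_rfl le_rfl)
      (ae_cond_Icc_mem_Icc (u' := -(2 * a)) (v' := -a) (by linarith) (by linarith))] with p hp
    linarith
  · filter_upwards [ae_prod_abs_sub_le_of_ae_mem_Icc (ae_cond_Icc_mem_Icc le_rfl le_rfl)
      (ae_cond_Icc_mem_Icc (u' := a) (v' := 2 * a) (by linarith) (by linarith))] with p hp
    linarith
end

section
/- Let a > b > 0. Let D₁ be the uniform probability measure on [−2a,−a] ∪ [a,2a]; for x₀ ∈ [a+b/2, 2a−b/2] let D₂(x₀) be the uniform probability measure on [−x₀−b/2, −x₀+b/2] ∪ [x₀−b/2, x₀+b/2]; and for x₀' ∈ [a+b, 2a−b] let D₃(x₀') be the uniform probability measure on [x₀'−b, x₀'+b]. Then for every x₀' ∈ [a+b, 2a−b] and every x₀ ∈ [a+b/2, 2a−b/2], W₁(D₁, D₃(x₀')) > W₁(D₁, D₂(x₀)); equivalently, the minimum over x₀' of W₁(D₁, D₃(x₀')) is strictly greater than the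 maximum over x₀ of W₁(D₁, D₂(x₀)). Here W₁(μ,ν) denotes the infimum, over all probability measures γ on ℝ × ℝ whose first marginal is μ and second marginal is ν, of ∫ |x−y| dγ(x,y). -/
open MeasureTheory

/-! Every coupling of `μ` and `ν` costs at least `|mean μ - mean ν|`, because `|x - y| ≥ ±(x - y)`.
`D₁ a` is centred and `D₃ x₀' b` has mean `x₀' ≥ a + b`, so `W1 (D₁ a) (D₃ x₀' b) ≥ a + b`.
Conversely, the odd map contracting `[a, 2a]` affinely onto `[x₀ - b/2, x₀ + b/2]` pushes `D₁ a`
forward to `D₂ x₀ b` and moves no point of the support by more than `a - b`; the coupling carried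
by its graph gives `W1 (D₁ a) (D₂ x₀ b) ≤ a - b`. -/

section Wasserstein

variable {μ ν : Measure ℝ}

lemma isCoupling_prod [IsProbabilityMeasure μ] [IsProbabilityMeasure ν] :
    IsCoupling (μ.prod ν) μ ν :=
  ⟨inferInstance, by simp, by simp⟩

lemma isCoupling_map_graph [IsProbabilityMeasure μ] {T : ℝ → ℝ} (hT : Measurable T) :
    IsCoupling (μ.map fun x => (x, T x)) μ (μ.map T) := by
  have hgraph : Measurable fun x => (x, T x) := measurable_id.prodMk hT
  refine ⟨Measure.isProbabilityMeasure_map hgraph.aemeasurable, ?_, ?_⟩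
  · rw [Measure.map_map measurable_fst hgraph]
    exact Measure.map_id
  · rw [Measure.map_map measurable_snd hgraph]
    rfl

lemma W1_le_integral {γ : Measure (ℝ × ℝ)} (hγ : IsCoupling γ μ ν) :
    W1 μ ν ≤ ∫ p, |p.1 - p.2| ∂γ :=
  csInf_le ⟨0, by rintro _ ⟨_, _, rfl⟩; exact integral_nonneg fun _ => abs_nonneg _⟩ ⟨γ, hγ, rfl⟩

lemma abs_integral_sub_le_W1 [IsProbabilityMeasure μ] [IsProbabilityMeasure ν]
    (hμ : Integrable (fun x => x) μ) (hν : Integrable (fun x => x) ν) :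
    |∫ x, x ∂μ - ∫ x, x ∂ν| ≤ W1 μ ν := by
  refine le_csInf ⟨_, _, isCoupling_prod, rfl⟩ ?_
  rintro _ ⟨γ, ⟨-, rfl, rfl⟩, rfl⟩
  have h₁ : Integrable (fun p : ℝ × ℝ => p.1) γ :=
    (integrable_map_measure aestronglyMeasurable_id measurable_fst.aemeasurable).1 hμ
  have h₂ : Integrable (fun p : ℝ × ℝ => p.2) γ :=
    (integrable_map_measure aestronglyMeasurable_id measurable_snd.aemeasurable).1 hν
  calc |∫ x, x ∂(γ.map Prod.fst) - ∫ x, x ∂(γ.map Prod.snd)| = |∫ p, (p.1 - p.2) ∂γ| := by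
        rw [integral_map measurable_fst.aemeasurable aestronglyMeasurable_id (f := fun x => x),
          integral_map measurable_snd.aemeasurable aestronglyMeasurable_id (f := fun x => x),
          integral_sub h₁ h₂]
    _ ≤ ∫ p, |p.1 - p.2| ∂γ := abs_integral_le_integral_abs

lemma W1_map_le_of_ae_abs_sub_le [IsProbabilityMeasure μ] {T : ℝ → ℝ} (hT : Measurable T)
    {C : ℝ} (hC : ∀ᵐ x ∂μ, |x - T x| ≤ C) :
    W1 μ (μ.map T) ≤ C :=
  calc W1 μ (μ.map T) ≤ ∫ p, |p.1 - p.2| ∂(μ.map fun x => (x, T x)) :=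
        W1_le_integral (isCoupling_map_graph hT)
    _ = ∫ x, |x - T x| ∂μ :=
        integral_map (measurable_id.prodMk hT).aemeasurable (by fun_prop)
    _ ≤ ∫ _, C ∂μ := integral_mono_of_nonneg (ae_of_all _ fun _ => abs_nonneg _)
        (integrable_const C) hC
    _ = C := by simp

end Wasserstein

lemma setIntegral_Icc_id {l u : ℝ} (h : l ≤ u) : ∫ x in Set.Icc l u, x = (u ^ 2 - l ^ 2) / 2 := by
  rw [integral_Icc_eq_integral_Ioc, ← intervalIntegral.integral_of_le h, integral_id]

lemma integrableOn_Icc_id (l u : ℝ) : IntegrableOn (fun x => x) (Set.Icc l u) :=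
  continuous_id.integrableOn_Icc

lemma disjoint_Icc_of_lt {l u l' u' : ℝ} (h : u < l') : Disjoint (Set.Icc l u) (Set.Icc l' u') :=
  Set.disjoint_left.2 fun _ hx hx' => (hx.2.trans_lt h).not_ge hx'.1

lemma map_volume_restrict_Icc_affine {m : ℝ} (hm : 0 < m) {c l u l' u' : ℝ}
    (hl : m * l + c = l') (hu : m * u + c = u') :
    (volume.restrict (Set.Icc l u)).map (fun x => m * x + c) =
      ENNReal.ofReal m⁻¹ • volume.restrict (Set.Icc l' u') := by
  have hpre : (fun x => m * x + c) ⁻¹' Set.Icc l' u' = Set.Icc l u := by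
    ext x
    simp only [Set.mem_preimage, Set.mem_Icc, ← hl, ← hu, add_le_add_iff_right,
      mul_le_mul_iff_right₀ hm]
  have hmap : volume.map (fun x : ℝ => m * x + c) = ENNReal.ofReal m⁻¹ • volume := by
    rw [show (fun x : ℝ => m * x + c) = (· + c) ∘ (m * ·) from rfl,
      ← Measure.map_map (measurable_add_const c) (measurable_const_mul m),
      Real.map_volume_mul_left hm.ne', Measure.map_smul, map_add_right_eq_self,
      abs_of_pos (inv_pos.2 hm)]
  have hemb : MeasurableEmbedding fun x : ℝ => m * x + c :=
    (affineHomeomorph m c hm.ne').measurableEmbedding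
  rw [← hpre, ← hemb.restrict_map, hmap, Measure.restrict_smul]

section Blobs

variable {a b : ℝ}

lemma isProbabilityMeasure_D₁ (ha : 0 < a) : IsProbabilityMeasure (D₁ a) := by
  constructor
  rw [D₁, Measure.smul_apply, Measure.restrict_apply_univ,
    measure_union (disjoint_Icc_of_lt (by linarith)) measurableSet_Icc, Real.volume_Icc,
    Real.volume_Icc, ← ENNReal.ofReal_add (by linarith) (by linarith), smul_eq_mul,
    ← ENNReal.ofReal_mul (by positivity),
    show 1 / (2 * a) * (-a - -(2 * a) + (2 * a - a)) = 1 by field_simp; ring, ENNReal.ofReal_one]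

lemma isProbabilityMeasure_D₃ (x : ℝ) (hb : 0 < b) : IsProbabilityMeasure (D₃ x b) := by
  constructor
  rw [D₃, Measure.smul_apply, Measure.restrict_apply_univ, Real.volume_Icc, smul_eq_mul,
    ← ENNReal.ofReal_mul (by positivity),
    show 1 / (2 * b) * (x + b - (x - b)) = 1 by field_simp; ring, ENNReal.ofReal_one]

lemma integrable_id_D₁ (a : ℝ) : Integrable (fun x => x) (D₁ a) :=
  ((integrableOn_Icc_id _ _).union (integrableOn_Icc_id _ _)).smul_measure ENNReal.ofReal_ne_top

lemma integrable_id_D₃ (x b : ℝ) : Integrable (fun y => y) (D₃ x b) :=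
  (integrableOn_Icc_id _ _).smul_measure ENNReal.ofReal_ne_top

lemma integral_id_D₁ (ha : 0 < a) : ∫ x, x ∂(D₁ a) = 0 := by
  rw [D₁, integral_smul_measure, setIntegral_union (disjoint_Icc_of_lt (by linarith))
    measurableSet_Icc (integrableOn_Icc_id _ _) (integrableOn_Icc_id _ _),
    setIntegral_Icc_id (by linarith), setIntegral_Icc_id (by linarith)]
  ring_nf

lemma integral_id_D₃ (x : ℝ) (hb : 0 < b) : ∫ y, y ∂(D₃ x b) = x := by
  rw [D₃, integral_smul_measure, setIntegral_Icc_id (by linarith),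
    ENNReal.toReal_ofReal (by positivity), smul_eq_mul]
  field_simp
  ring

lemma le_W1_D₁_D₃ (x : ℝ) (ha : 0 < a) (hb : 0 < b) : x ≤ W1 (D₁ a) (D₃ x b) := by
  have := isProbabilityMeasure_D₁ ha
  have := isProbabilityMeasure_D₃ x hb
  have h := abs_integral_sub_le_W1 (integrable_id_D₁ a) (integrable_id_D₃ x b)
  rw [integral_id_D₁ ha, integral_id_D₃ x hb, zero_sub, abs_neg] at h
  exact (le_abs_self x).trans h

/-- Contracts `[a, 2a]` by the factor `b / a` onto `[x₀ - b/2, x₀ + b/2]`, and symmetrically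
`[-2a, -a]` onto `[-x₀ - b/2, -x₀ + b/2]`. -/
noncomputable def twoBlobMap (a b x₀ x : ℝ) : ℝ :=
  if 0 ≤ x then b / a * x + (x₀ - 3 * b / 2) else b / a * x - (x₀ - 3 * b / 2)

lemma measurable_twoBlobMap (a b x₀ : ℝ) : Measurable (twoBlobMap a b x₀) :=
  Measurable.ite measurableSet_Ici (by fun_prop) (by fun_prop)

lemma map_D₁_twoBlobMap (ha : 0 < a) (hb : 0 < b) {x₀ : ℝ} (hx₀ : b / 2 < x₀) :
    (D₁ a).map (twoBlobMap a b x₀) = D₂ x₀ b := by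
  have hm : 0 < b / a := div_pos hb ha
  have hma : b / a * a = b := div_mul_cancel₀ b ha.ne'
  have hneg : (volume.restrict (Set.Icc (-(2 * a)) (-a))).map (twoBlobMap a b x₀) =
      ENNReal.ofReal (b / a)⁻¹ • volume.restrict (Set.Icc (-x₀ - b / 2) (-x₀ + b / 2)) := by
    rw [← map_volume_restrict_Icc_affine hm (c := -(x₀ - 3 * b / 2)) (l := -(2 * a)) (u := -a)
      (by linarith) (by linarith)]
    exact Measure.map_congr
      (ae_restrict_of_forall_mem measurableSet_Icc fun x hx => if_neg (by linarith [hx.2]))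
  have hpos : (volume.restrict (Set.Icc a (2 * a))).map (twoBlobMap a b x₀) =
      ENNReal.ofReal (b / a)⁻¹ • volume.restrict (Set.Icc (x₀ - b / 2) (x₀ + b / 2)) := by
    rw [← map_volume_restrict_Icc_affine hm (c := x₀ - 3 * b / 2) (l := a) (u := 2 * a)
      (by linarith) (by linarith)]
    exact Measure.map_congr
      (ae_restrict_of_forall_mem measurableSet_Icc fun x hx => if_pos (by linarith [hx.1]))
  have hcoef : ENNReal.ofReal (1 / (2 * a)) * ENNReal.ofReal (b / a)⁻¹ =
      ENNReal.ofReal (1 / (2 * b)) := by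
    rw [← ENNReal.ofReal_mul (by positivity)]
    congr 1
    field_simp
  rw [D₁, Measure.restrict_union (disjoint_Icc_of_lt (by linarith)) measurableSet_Icc,
    Measure.map_smul, Measure.map_add _ _ (measurable_twoBlobMap a b x₀), hneg, hpos,
    ← smul_add, smul_smul, hcoef, D₂,
    Measure.restrict_union (disjoint_Icc_of_lt (by linarith)) measurableSet_Icc]

lemma abs_sub_twoBlobMap_le (ha : 0 < a) (hba : b ≤ a) {x₀ : ℝ}
    (hx₀ : x₀ ∈ Set.Icc (a + b / 2) (2 * a - b / 2)) {x : ℝ}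
    (hx : x ∈ Set.Icc (-(2 * a)) (-a) ∪ Set.Icc a (2 * a)) :
    |x - twoBlobMap a b x₀ x| ≤ a - b := by
  have hma : b / a * a = b := div_mul_cancel₀ b ha.ne'
  have hm : b / a ≤ 1 := (div_le_one ha).2 hba
  obtain ⟨hx₀l, hx₀u⟩ := hx₀
  rw [abs_le]
  rcases hx with ⟨hxl, hxu⟩ | ⟨hxl, hxu⟩
  · rw [twoBlobMap, if_neg (by linarith)]
    constructor <;> nlinarith [mul_nonneg (show 0 ≤ x + 2 * a by linarith) (sub_nonneg.2 hm),
      mul_nonneg (show 0 ≤ -a - x by linarith) (sub_nonneg.2 hm)]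
  · rw [twoBlobMap, if_pos (by linarith)]
    constructor <;> nlinarith [mul_nonneg (show 0 ≤ x - a by linarith) (sub_nonneg.2 hm),
      mul_nonneg (show 0 ≤ 2 * a - x by linarith) (sub_nonneg.2 hm)]

lemma W1_D₁_D₂_le (hb : 0 < b) (hba : b ≤ a) {x₀ : ℝ}
    (hx₀ : x₀ ∈ Set.Icc (a + b / 2) (2 * a - b / 2)) :
    W1 (D₁ a) (D₂ x₀ b) ≤ a - b := by
  have ha : 0 < a := hb.trans_le hba
  have := isProbabilityMeasure_D₁ ha
  rw [← map_D₁_twoBlobMap ha hb (by linarith [hx₀.1])]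
  refine W1_map_le_of_ae_abs_sub_le (measurable_twoBlobMap a b x₀) ?_
  filter_upwards [Measure.ae_smul_measure
    (ae_restrict_mem (measurableSet_Icc.union measurableSet_Icc)) _] with x hx
  exact abs_sub_twoBlobMap_le ha hba hx₀ hx

end Blobs

theorem stmt_7 (a b : ℝ) (hb : 0 < b) (hab : b < a) :
    ∀ x₀' ∈ Set.Icc (a + b) (2 * a - b),
      ∀ x₀ ∈ Set.Icc (a + b / 2) (2 * a - b / 2),
        W1 (D₁ a) (D₂ x₀ b) < W1 (D₁ a) (D₃ x₀' b) := by
  intro x₀' hx₀' x₀ hx₀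
  calc W1 (D₁ a) (D₂ x₀ b) ≤ a - b := W1_D₁_D₂_le hb hab.le hx₀
    _ < a + b := by linarith
    _ ≤ x₀' := hx₀'.1
    _ ≤ W1 (D₁ a) (D₃ x₀' b) := le_W1_D₁_D₃ x₀' (hb.trans hab) hb
end
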